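/- arXiv:2308.15655 — 3 statements merged into one kernel-verified Lean document; each statement's English description precedes it below -/
import Mathlib

section
/- Let ϑ₁, ϑ₂, φ₁, φ₂ : ℂ → ℂ and write ϑ₁ = p₁₁ + i·p₁₂, ϑ₂ = p₂₁ + i·p₂₂, φ₁ = q₁₁ + i·q₁₂, φ₂ = q₂₁ + i·q₂₂ with real-valued component functions p_{ℓ,m}, q_{ℓ,m}. Define the product-type bicomplex functions ϑ(Z) := (ϑ₁(z₁), ϑ₂(z₂)) and φ(Z) := (φ₁(z₁), φ₂(z₂)) for Z = (z₁,z₂) ∈ ℂ × ℂ. Then ⟨ϑ(Z), φ(Z)⟩_𝐤 = 0 for all Z ∈ ℂ × ℂ if and only if (p₁₂(z₁), p₂₂(z₂)) · φ(Z) = −(i,i) · (q₁₁(z₁), q₂₁(z₂)) · ϑ(Z) for all Z = (z₁,z₂) ∈ ℂ × ℂ, where the products on both sides are componentwise products in ℂ × ℂ and real values are embedded in ℂ. -/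
lemma key_complex (a b : ℂ) :
    (1 / 2 : ℂ) * (star a * b + star b * a) = 0 ↔
      ((a.im : ℂ)) * b = -Complex.I * ((b.re : ℂ)) * a := by
  simp only [Complex.ext_iff, Complex.mul_re, Complex.mul_im, Complex.add_re, Complex.add_im,
    Complex.zero_re, Complex.zero_im, Complex.conj_re, Complex.conj_im, Complex.ofReal_re,
    Complex.ofReal_im, Complex.neg_re, Complex.neg_im, Complex.I_re, Complex.I_im,
    Complex.div_re, Complex.div_im, Complex.one_re, Complex.one_im, RCLike.star_def]
  norm_num [Complex.normSq]
  constructor <;> intro h <;> constructor <;> nlinarith [h.1, h.2]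

/-- Proposition 3.1: bicomplex orthogonality criterion in the idempotent representation
`𝔹ℂ ≅ ℂ × ℂ` (componentwise operations, `star` componentwise).  For product-type
bicomplex functions `ϑ(Z) = (ϑ₁ z₁, ϑ₂ z₂)` and `φ(Z) = (φ₁ z₁, φ₂ z₂)`, one has
`⟨ϑ, φ⟩_𝐤 ≡ 0` on `𝔹ℂ` iff `(p₁₂, p₂₂)·φ = -(i,i)·(q₁₁, q₂₁)·ϑ` on `𝔹ℂ`,
where `p_{ℓ,2}` are the imaginary parts of `ϑ_ℓ` and `q_{ℓ,1}` the real parts of `φ_ℓ`. -/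
theorem bicomplex_orthogonality_iff (ϑ₁ ϑ₂ φ₁ φ₂ : ℂ → ℂ) :
    (∀ z₁ z₂ : ℂ,
        (1 / 2 : ℂ × ℂ) *
            (star (ϑ₁ z₁, ϑ₂ z₂) * (φ₁ z₁, φ₂ z₂) +
              star (φ₁ z₁, φ₂ z₂) * (ϑ₁ z₁, ϑ₂ z₂)) = 0) ↔
      (∀ z₁ z₂ : ℂ,
        ((((ϑ₁ z₁).im : ℂ), ((ϑ₂ z₂).im : ℂ)) : ℂ × ℂ) * (φ₁ z₁, φ₂ z₂) =
          -((Complex.I, Complex.I) : ℂ × ℂ) *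
            ((((φ₁ z₁).re : ℂ), ((φ₂ z₂).re : ℂ)) : ℂ × ℂ) * (ϑ₁ z₁, ϑ₂ z₂)) := by
  refine forall_congr' fun z₁ => forall_congr' fun z₂ => ?_
  simp only [Prod.ext_iff, Prod.mk_mul_mk, Prod.mk_add_mk, Prod.fst_mul, Prod.snd_mul,
    Prod.fst_add, Prod.snd_add, Prod.fst_zero, Prod.snd_zero, Prod.star_def, Prod.fst_div,
    Prod.snd_div, Prod.fst_one, Prod.snd_one, Prod.fst_neg, Prod.snd_neg, Prod.fst_ofNat,
    Prod.snd_ofNat]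
  exact and_congr (key_complex _ _) (key_complex _ _)
end

section
/- Let a < b be real, σ ∈ (0,1], let φ be continuously differentiable on an open interval containing [a,b] with φ′ > 0 there, let α > 0, β > 0, and let f : ℝ → ℂ be continuous on [a,b]. Then for every t ∈ [a,b], ({}_aI^{α,σ,φ} ({}_aI^{β,σ,φ} f))(t) = ({}_aI^{α+β,σ,φ} f)(t) (semigroup property of the left proportional fractional integrals with respect to φ). -/
/-!
The exponential factor of the kernel splits as `exp (c φ(t)) * exp (-c φ(τ))` with
`c = (σ - 1) / σ`, so `{}_aI^{α,σ,φ} g = σ^(-α) exp (c φ) · J^α (exp (-c φ) g)`, where `J^α` is the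
Riemann–Liouville integral with respect to `φ`, and the claim reduces to
`J^α J^β = J^(α+β)`. For that, exchange the order of integration over the triangle
`a < s < τ < t` (Fubini applies since the integrand is bounded by `‖f‖_∞` times a product of
integrable kernels); the substitution `u = φ(τ)` turns the inner integral
`∫_s^t (φ t - φ τ)^(α-1) (φ τ - φ s)^(β-1) φ'(τ) dτ` into the Beta integral
`B(α, β) (φ t - φ s)^(α+β-1)`.
-/

open MeasureTheory intervalIntegral Set
open ProbabilityTheory (beta)

/-- The left proportional fractional integral of `f` of order `α > 0` with respect to `φ`
(with derivative `φ'`), proportion `σ`, based at `a`: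
`({}_aI^{α,σ,φ} f)(t) = (1/(σ^α Γ(α))) ∫_a^t e^{((σ-1)/σ)(φ(t)-φ(τ))} (φ(t)-φ(τ))^{α-1} f(τ) φ'(τ) dτ`. -/
noncomputable def propInt (a α σ : ℝ) (φ φ' : ℝ → ℝ) (f : ℝ → ℂ) (t : ℝ) : ℂ :=
  ((σ ^ α * Real.Gamma α)⁻¹ : ℝ) •
    ∫ τ in a..t,
      (Real.exp ((σ - 1) / σ * (φ t - φ τ)) * (φ t - φ τ) ^ (α - 1) * φ' τ) • f τ

lemma integral_rpow_mul_sub_rpow {e p q : ℝ} (he : 0 < e) (hp : 0 < p) (hq : 0 < q) :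
    ∫ v in (0 : ℝ)..e, v ^ (p - 1) * (e - v) ^ (q - 1) = e ^ (p + q - 1) * beta p q := by
  apply Complex.ofReal_injective
  have hcpow : ∀ v ∈ uIcc 0 e, ((v ^ (p - 1) * (e - v) ^ (q - 1) : ℝ) : ℂ)
      = (v : ℂ) ^ ((p : ℂ) - 1) * ((e : ℂ) - v) ^ ((q : ℂ) - 1) := by
    intro v hv
    rw [uIcc_of_le he.le] at hv
    rw [Complex.ofReal_mul, Complex.ofReal_cpow hv.1, Complex.ofReal_cpow (sub_nonneg.2 hv.2)]
    push_cast
    rfl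
  rw [← intervalIntegral.integral_ofReal, integral_congr hcpow, Complex.betaIntegral_scaled _ _ he,
    Complex.betaIntegral_eq_Gamma_mul_div _ _ (by simpa) (by simpa), beta,
    Complex.ofReal_mul, Complex.ofReal_cpow he.le]
  push_cast
  rw [← Complex.ofReal_add, ← Complex.Gamma_ofReal, ← Complex.Gamma_ofReal, ← Complex.Gamma_ofReal]

lemma integral_Icc_sub_rpow_mul_rpow_sub {c d α β : ℝ} (hcd : c < d) (hα : 0 < α) (hβ : 0 < β) :
    ∫ u in Icc c d, (d - u) ^ (α - 1) * (u - c) ^ (β - 1) = (d - c) ^ (α + β - 1) * beta α β := by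
  have hshift := integral_comp_sub_right
    (fun v => v ^ (β - 1) * (d - c - v) ^ (α - 1)) (a := c) (b := d) c
  simp only [sub_self, sub_sub_sub_cancel_right] at hshift
  rw [integral_Icc_eq_integral_Ioc, ← integral_of_le hcd.le]
  simp_rw [mul_comm ((d - _) ^ (α - 1))]
  rw [hshift, integral_rpow_mul_sub_rpow (sub_pos.2 hcd) hβ hα, add_comm β, beta, beta,
    add_comm β, mul_comm (Real.Gamma β)]

lemma integrableOn_Icc_sub_rpow {c d γ : ℝ} (hγ : 0 < γ) :
    IntegrableOn (fun u => (d - u) ^ (γ - 1)) (Icc c d) := by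
  rw [integrableOn_Icc_iff_integrableOn_Ioc]
  have h := (intervalIntegrable_rpow' (a := d - c) (b := d - d)
    (by linarith : -1 < γ - 1)).comp_sub_left d
  simp only [sub_sub_cancel] at h
  exact h.1

lemma integral_Icc_sub_rpow {c d γ : ℝ} (hcd : c ≤ d) (hγ : 0 < γ) :
    ∫ u in Icc c d, (d - u) ^ (γ - 1) = (d - c) ^ γ / γ := by
  rw [integral_Icc_eq_integral_Ioc, ← integral_of_le hcd,
    integral_comp_sub_left (fun v => v ^ (γ - 1)), integral_rpow (Or.inl (by linarith)),
    sub_self, sub_add_cancel, Real.zero_rpow hγ.ne', sub_zero]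

lemma strictMonoOn_Icc_of_hasDerivAt_pos {φ φ' : ℝ → ℝ} {a b : ℝ}
    (hφc : ContinuousOn φ (Icc a b)) (hφ : ∀ x ∈ Ioo a b, HasDerivAt φ (φ' x) x)
    (hpos : ∀ x ∈ Ioo a b, 0 < φ' x) : StrictMonoOn φ (Icc a b) :=
  strictMonoOn_of_hasDerivWithinAt_pos (convex_Icc a b) hφc
    (by simpa only [interior_Icc] using fun x hx => (hφ x hx).hasDerivWithinAt)
    (by simpa only [interior_Icc] using hpos)

/-- The kernel of the Riemann–Liouville integral with respect to `φ`: that of `propInt` without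
its exponential factor. -/
noncomputable def rlKernel (φ φ' : ℝ → ℝ) (γ x τ : ℝ) : ℝ := φ' τ * (φ x - φ τ) ^ (γ - 1)

section Kernel

variable {φ φ' : ℝ → ℝ}

lemma rlKernel_nonneg {γ x τ : ℝ} (hφ : φ τ ≤ φ x) (hφ' : 0 ≤ φ' τ) :
    0 ≤ rlKernel φ φ' γ x τ :=
  mul_nonneg hφ' (Real.rpow_nonneg (sub_nonneg.2 hφ) _)

lemma continuousAt_rlKernel {X : Type*} [TopologicalSpace X] {γ : ℝ} {u v : X → ℝ} {q : X}
    (hu : ContinuousAt (fun z => φ (u z)) q) (hv : ContinuousAt (fun z => φ (v z)) q)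
    (hv' : ContinuousAt (fun z => φ' (v z)) q) (hne : φ (u q) ≠ φ (v q)) :
    ContinuousAt (fun z => rlKernel φ φ' γ (u z) (v z)) q :=
  hv'.mul ((hu.sub hv).rpow_const (Or.inl (sub_ne_zero.2 hne)))

variable {x y : ℝ}

lemma integrableOn_rlKernel {γ : ℝ} (hφc : ContinuousOn φ (Icc x y))
    (hφ : ∀ τ ∈ Ioo x y, HasDerivAt φ (φ' τ) τ) (hφ' : ∀ τ ∈ Ioo x y, 0 ≤ φ' τ) (hγ : 0 < γ) :
    IntegrableOn (rlKernel φ φ' γ y) (Ioo x y) := by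
  rcases le_or_gt x y with hxy | hxy
  · exact ((integrableOn_Icc_deriv_smul_iff_of_deriv_nonneg hφc hφ hφ' hxy).2
      (integrableOn_Icc_sub_rpow hγ)).mono_set Ioo_subset_Icc_self
  · simp [Ioo_eq_empty hxy.not_gt]

lemma integral_rlKernel {γ : ℝ} (hxy : x ≤ y) (hφc : ContinuousOn φ (Icc x y))
    (hφ : ∀ τ ∈ Ioo x y, HasDerivAt φ (φ' τ) τ) (hφ' : ∀ τ ∈ Ioo x y, 0 ≤ φ' τ)
    (hφxy : φ x ≤ φ y) (hγ : 0 < γ) :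
    ∫ τ in Ioo x y, rlKernel φ φ' γ y τ = (φ y - φ x) ^ γ / γ := by
  rw [← integral_Icc_eq_integral_Ioo, ← integral_Icc_sub_rpow hφxy hγ]
  exact integral_Icc_deriv_smul_of_deriv_nonneg hφc hφ hφ' hxy (g := fun u => (φ y - u) ^ (γ - 1))

lemma integral_rlKernel_mul_rlKernel {α β : ℝ} (hxy : x ≤ y) (hφc : ContinuousOn φ (Icc x y))
    (hφ : ∀ τ ∈ Ioo x y, HasDerivAt φ (φ' τ) τ) (hφ' : ∀ τ ∈ Ioo x y, 0 ≤ φ' τ)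
    (hφxy : φ x < φ y) (hα : 0 < α) (hβ : 0 < β) :
    ∫ τ in Ioo x y, rlKernel φ φ' α y τ * rlKernel φ φ' β τ x
      = beta α β * rlKernel φ φ' (α + β) y x := by
  have hfactor : ∀ τ, rlKernel φ φ' α y τ * rlKernel φ φ' β τ x
      = φ' x * (φ' τ • ((φ y - φ τ) ^ (α - 1) * (φ τ - φ x) ^ (β - 1))) := by
    intro τ; simp only [rlKernel, smul_eq_mul]; ring
  simp_rw [hfactor]
  rw [MeasureTheory.integral_const_mul, ← integral_Icc_eq_integral_Ioo,
    integral_Icc_deriv_smul_of_deriv_nonneg hφc hφ hφ' hxy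
      (g := fun u => (φ y - u) ^ (α - 1) * (u - φ x) ^ (β - 1)),
    integral_Icc_sub_rpow_mul_rpow_sub hφxy hα hβ, rlKernel]
  ring

end Kernel

def openTriangle (a t : ℝ) : Set (ℝ × ℝ) := {p | a < p.2 ∧ p.2 < p.1 ∧ p.1 < t}

namespace openTriangle

variable {a t : ℝ}

lemma isOpen : IsOpen (openTriangle a t) :=
  (isOpen_lt continuous_const continuous_snd).inter
    ((isOpen_lt continuous_snd continuous_fst).inter (isOpen_lt continuous_fst continuous_const))

lemma mk_mem_iff_fst {τ s : ℝ} : (τ, s) ∈ openTriangle a t ↔ τ ∈ Ioo a t ∧ s ∈ Ioo a τ :=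
  ⟨fun ⟨h1, h2, h3⟩ => ⟨⟨h1.trans h2, h3⟩, h1, h2⟩, fun ⟨⟨_, h3⟩, h1, h2⟩ => ⟨h1, h2, h3⟩⟩

lemma mk_mem_iff_snd {τ s : ℝ} : (τ, s) ∈ openTriangle a t ↔ s ∈ Ioo a t ∧ τ ∈ Ioo s t :=
  ⟨fun ⟨h1, h2, h3⟩ => ⟨⟨h1, h2.trans h3⟩, h2, h3⟩, fun ⟨⟨h1, _⟩, h2, h3⟩ => ⟨h1, h2, h3⟩⟩

lemma indicator_mk {M : Type*} [Zero M] (H : ℝ × ℝ → M) (τ s : ℝ) :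
    (openTriangle a t).indicator H (τ, s)
      = (Ioo a t).indicator (fun τ => (Ioo a τ).indicator (fun s => H (τ, s)) s) τ := by
  classical
  simp only [indicator_apply, mk_mem_iff_fst, ite_and]

variable {E : Type*} [NormedAddCommGroup E]

lemma integral_indicator_fst [NormedSpace ℝ E] (H : ℝ × ℝ → E) (τ : ℝ) :
    ∫ s, (openTriangle a t).indicator H (τ, s)
      = (Ioo a t).indicator (fun τ => ∫ s in Ioo a τ, H (τ, s)) τ := by
  by_cases hτ : τ ∈ Ioo a t
  · simp only [indicator_mk, indicator_of_mem hτ]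
    exact MeasureTheory.integral_indicator measurableSet_Ioo
  · simp [indicator_mk, indicator_of_notMem hτ]

lemma integral_indicator_snd [NormedSpace ℝ E] (H : ℝ × ℝ → E) (s : ℝ) :
    ∫ τ, (openTriangle a t).indicator H (τ, s)
      = (Ioo a t).indicator (fun s => ∫ τ in Ioo s t, H (τ, s)) s := by
  classical
  by_cases hs : s ∈ Ioo a t
  · rw [indicator_of_mem hs, ← MeasureTheory.integral_indicator measurableSet_Ioo]
    congr 1 with τ
    simp only [indicator_apply, mk_mem_iff_snd, hs, true_and]
  · simp [mk_mem_iff_snd, hs]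

lemma integrableOn_of_integral_norm_le {H : ℝ × ℝ → E} {g : ℝ → ℝ}
    (hH : AEStronglyMeasurable H (volume.restrict (openTriangle a t)))
    (hslice : ∀ τ ∈ Ioo a t, IntegrableOn (fun s => H (τ, s)) (Ioo a τ))
    (hg : IntegrableOn g (Ioo a t))
    (hbound : ∀ τ ∈ Ioo a t, ∫ s in Ioo a τ, ‖H (τ, s)‖ ≤ g τ) :
    IntegrableOn H (openTriangle a t) := by
  have hmeas : MeasurableSet (openTriangle a t) := isOpen.measurableSet
  have hF : AEStronglyMeasurable ((openTriangle a t).indicator H) (volume.prod volume) := by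
    rw [← Measure.volume_eq_prod]
    exact (aestronglyMeasurable_indicator_iff hmeas).2 hH
  rw [← integrable_indicator_iff hmeas, Measure.volume_eq_prod]
  refine (integrable_prod_iff hF).2 ⟨ae_of_all _ fun τ => ?_, ?_⟩
  · by_cases hτ : τ ∈ Ioo a t
    · simpa only [indicator_mk, indicator_of_mem hτ]
        using (integrable_indicator_iff measurableSet_Ioo).2 (hslice τ hτ)
    · simp [indicator_mk, indicator_of_notMem hτ]
  · refine (hg.integrable_indicator measurableSet_Ioo).mono' hF.norm.integral_prod_right'
      (ae_of_all _ fun τ => ?_)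
    simp_rw [norm_indicator_eq_indicator_norm]
    rw [Real.norm_of_nonneg (integral_nonneg fun _ => indicator_nonneg (fun _ _ => norm_nonneg _) _),
      integral_indicator_fst]
    exact indicator_le_indicator' (hbound τ)

lemma integral_integral_swap [NormedSpace ℝ E] [CompleteSpace E] {H : ℝ × ℝ → E}
    (hH : IntegrableOn H (openTriangle a t)) :
    ∫ τ in Ioo a t, ∫ s in Ioo a τ, H (τ, s) = ∫ s in Ioo a t, ∫ τ in Ioo s t, H (τ, s) := by
  have hF := (integrable_indicator_iff isOpen.measurableSet).2 hH
  rw [Measure.volume_eq_prod] at hF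
  have hswap := MeasureTheory.integral_integral_swap
    (f := fun τ s => (openTriangle a t).indicator H (τ, s)) hF
  simp only [integral_indicator_fst, integral_indicator_snd] at hswap
  rwa [MeasureTheory.integral_indicator measurableSet_Ioo,
    MeasureTheory.integral_indicator measurableSet_Ioo] at hswap

end openTriangle

section Composition

variable {E : Type*} [NormedAddCommGroup E] [NormedSpace ℝ E] {φ φ' : ℝ → ℝ} {a t α β : ℝ}
  {h : ℝ → E}

lemma continuousOn_openTriangle_rlKernel_mul_rlKernel_smul (hmono : StrictMonoOn φ (Icc a t))
    (hφc : ContinuousOn φ (Icc a t)) (hφ'c : ContinuousOn φ' (Ioo a t))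
    (hh : ContinuousOn h (Icc a t)) :
    ContinuousOn (fun p : ℝ × ℝ => (rlKernel φ φ' α t p.1 * rlKernel φ φ' β p.1 p.2) • h p.2)
      (openTriangle a t) := by
  intro q hq
  obtain ⟨h1, h2⟩ := openTriangle.mk_mem_iff_fst.1 hq
  have h2' : q.2 ∈ Ioo a t := ⟨h2.1, h2.2.trans h1.2⟩
  have hφ1 := hφc.continuousAt (Icc_mem_nhds h1.1 h1.2)
  have hφ2 := hφc.continuousAt (Icc_mem_nhds h2'.1 h2'.2)
  have hφ'1 := hφ'c.continuousAt (Ioo_mem_nhds h1.1 h1.2)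
  have hφ'2 := hφ'c.continuousAt (Ioo_mem_nhds h2'.1 h2'.2)
  have hne1 : φ t ≠ φ q.1 :=
    (hmono (Ioo_subset_Icc_self h1) (right_mem_Icc.2 (h1.1.trans h1.2).le) h1.2).ne'
  have hne2 : φ q.1 ≠ φ q.2 := (hmono (Ioo_subset_Icc_self h2') (Ioo_subset_Icc_self h1) h2.2).ne'
  refine ContinuousAt.continuousWithinAt (((continuousAt_rlKernel continuousAt_const
    (hφ1.comp continuousAt_fst) (hφ'1.comp continuousAt_fst) hne1).mul
    (continuousAt_rlKernel (hφ1.comp continuousAt_fst) (hφ2.comp continuousAt_snd)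
      (hφ'2.comp continuousAt_snd) hne2)).smul ?_)
  exact (hh.continuousAt (Icc_mem_nhds h2'.1 h2'.2)).comp continuousAt_snd

lemma integral_norm_rlKernel_mul_rlKernel_smul_le {M τ : ℝ} (hφc : ContinuousOn φ (Icc a t))
    (hφ : ∀ x ∈ Ioo a t, HasDerivAt φ (φ' x) x) (hpos : ∀ x ∈ Ioo a t, 0 < φ' x)
    (hM : ∀ s ∈ Icc a t, ‖h s‖ ≤ M) (hβ : 0 < β) (hτ : τ ∈ Ioo a t) :
    ∫ s in Ioo a τ, ‖(rlKernel φ φ' α t τ * rlKernel φ φ' β τ s) • h s‖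
      ≤ M * ((φ t - φ a) ^ β / β) * rlKernel φ φ' α t τ := by
  have hmono := strictMonoOn_Icc_of_hasDerivAt_pos hφc hφ hpos
  have hτt : τ ∈ Icc a t := Ioo_subset_Icc_self hτ
  have hat : a ≤ t := (hτ.1.trans hτ.2).le
  have hφc' : ContinuousOn φ (Icc a τ) := hφc.mono (Icc_subset_Icc_right hτ.2.le)
  have hφ' : ∀ s ∈ Ioo a τ, HasDerivAt φ (φ' s) s :=
    fun s hs => hφ s (Ioo_subset_Ioo_right hτ.2.le hs)
  have hpos' : ∀ s ∈ Ioo a τ, 0 ≤ φ' s := fun s hs => (hpos s (Ioo_subset_Ioo_right hτ.2.le hs)).le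
  have hφa : φ a ≤ φ τ := hmono.monotoneOn (left_mem_Icc.2 hat) hτt hτt.1
  have hφt : φ τ ≤ φ t := hmono.monotoneOn hτt (right_mem_Icc.2 hat) hτt.2
  have hkα : 0 ≤ rlKernel φ φ' α t τ := rlKernel_nonneg hφt (hpos τ hτ).le
  have hM0 : 0 ≤ M := (norm_nonneg _).trans (hM τ hτt)
  calc ∫ s in Ioo a τ, ‖(rlKernel φ φ' α t τ * rlKernel φ φ' β τ s) • h s‖
      ≤ ∫ s in Ioo a τ, M * rlKernel φ φ' α t τ * rlKernel φ φ' β τ s := by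
        refine integral_mono_of_nonneg (ae_of_all _ fun _ => norm_nonneg _)
          ((integrableOn_rlKernel hφc' hφ' hpos' hβ).const_mul _)
          ((ae_restrict_iff' measurableSet_Ioo).2 (ae_of_all _ fun s hs => ?_))
        have hst : s ∈ Icc a t := ⟨hs.1.le, hs.2.le.trans hτt.2⟩
        have hkβ : 0 ≤ rlKernel φ φ' β τ s :=
          rlKernel_nonneg (hmono.monotoneOn hst hτt hs.2.le) (hpos' s hs)
        dsimp only
        rw [norm_smul, Real.norm_of_nonneg (mul_nonneg hkα hkβ)]
        exact (mul_le_mul_of_nonneg_left (hM s hst) (mul_nonneg hkα hkβ)).trans_eq (by ring)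
    _ = M * rlKernel φ φ' α t τ * ((φ τ - φ a) ^ β / β) := by
        rw [MeasureTheory.integral_const_mul, integral_rlKernel hτ.1.le hφc' hφ' hpos' hφa hβ]
    _ ≤ M * ((φ t - φ a) ^ β / β) * rlKernel φ φ' α t τ := by
        rw [mul_right_comm]
        gcongr

lemma integrableOn_openTriangle_rlKernel_mul_rlKernel_smul
    (hφc : ContinuousOn φ (Icc a t)) (hφ : ∀ τ ∈ Ioo a t, HasDerivAt φ (φ' τ) τ)
    (hφ'c : ContinuousOn φ' (Ioo a t)) (hpos : ∀ τ ∈ Ioo a t, 0 < φ' τ)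
    (hh : ContinuousOn h (Icc a t)) (hα : 0 < α) (hβ : 0 < β) :
    IntegrableOn (fun p : ℝ × ℝ => (rlKernel φ φ' α t p.1 * rlKernel φ φ' β p.1 p.2) • h p.2)
      (openTriangle a t) := by
  obtain ⟨M, hM⟩ := isCompact_Icc.exists_bound_of_continuousOn hh
  refine openTriangle.integrableOn_of_integral_norm_le
    (g := fun τ => M * ((φ t - φ a) ^ β / β) * rlKernel φ φ' α t τ)
    ((continuousOn_openTriangle_rlKernel_mul_rlKernel_smul
      (strictMonoOn_Icc_of_hasDerivAt_pos hφc hφ hpos) hφc hφ'c hh).aestronglyMeasurable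
      openTriangle.isOpen.measurableSet)
    (fun τ hτ => ?_)
    ((integrableOn_rlKernel hφc hφ (fun τ hτ => (hpos τ hτ).le) hα).const_mul _)
    (fun τ hτ => integral_norm_rlKernel_mul_rlKernel_smul_le hφc hφ hpos hM hβ hτ)
  simp only [mul_smul]
  exact ((integrableOn_rlKernel (hφc.mono (Icc_subset_Icc_right hτ.2.le))
    (fun s hs => hφ s (Ioo_subset_Ioo_right hτ.2.le hs))
    (fun s hs => (hpos s (Ioo_subset_Ioo_right hτ.2.le hs)).le) hβ).smul_continuousOn_of_subset
    hh measurableSet_Ioo isCompact_Icc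
    (Ioo_subset_Icc_self.trans (Icc_subset_Icc_right hτ.2.le))).smul (rlKernel φ φ' α t τ)

theorem integral_rlKernel_smul_integral_rlKernel_smul [CompleteSpace E]
    (hφc : ContinuousOn φ (Icc a t)) (hφ : ∀ τ ∈ Ioo a t, HasDerivAt φ (φ' τ) τ)
    (hφ'c : ContinuousOn φ' (Ioo a t)) (hpos : ∀ τ ∈ Ioo a t, 0 < φ' τ)
    (hh : ContinuousOn h (Icc a t)) (hα : 0 < α) (hβ : 0 < β) :
    ∫ τ in Ioo a t, rlKernel φ φ' α t τ • ∫ s in Ioo a τ, rlKernel φ φ' β τ s • h s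
      = beta α β • ∫ s in Ioo a t, rlKernel φ φ' (α + β) t s • h s := by
  have hmono := strictMonoOn_Icc_of_hasDerivAt_pos hφc hφ hpos
  calc ∫ τ in Ioo a t, rlKernel φ φ' α t τ • ∫ s in Ioo a τ, rlKernel φ φ' β τ s • h s
      = ∫ τ in Ioo a t, ∫ s in Ioo a τ, (rlKernel φ φ' α t τ * rlKernel φ φ' β τ s) • h s := by
        simp_rw [mul_smul, MeasureTheory.integral_smul]
    _ = ∫ s in Ioo a t, ∫ τ in Ioo s t, (rlKernel φ φ' α t τ * rlKernel φ φ' β τ s) • h s :=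
        openTriangle.integral_integral_swap
          (integrableOn_openTriangle_rlKernel_mul_rlKernel_smul hφc hφ hφ'c hpos hh hα hβ)
    _ = ∫ s in Ioo a t, (beta α β * rlKernel φ φ' (α + β) t s) • h s := by
        refine setIntegral_congr_fun measurableSet_Ioo fun s hs => ?_
        rw [_root_.integral_smul_const, integral_rlKernel_mul_rlKernel hs.2.le
          (hφc.mono (Icc_subset_Icc_left hs.1.le)) (fun τ hτ => hφ τ ⟨hs.1.trans hτ.1, hτ.2⟩)
          (fun τ hτ => (hpos τ ⟨hs.1.trans hτ.1, hτ.2⟩).le)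
          (hmono ⟨hs.1.le, hs.2.le⟩ ⟨(hs.1.trans hs.2).le, le_rfl⟩ hs.2) hα hβ]
    _ = beta α β • ∫ s in Ioo a t, rlKernel φ φ' (α + β) t s • h s := by
        simp_rw [mul_smul, MeasureTheory.integral_smul]

end Composition

lemma propInt_eq_smul_integral_rlKernel {a γ σ x : ℝ} {φ φ' : ℝ → ℝ} {g : ℝ → ℂ} (hax : a ≤ x) :
    propInt a γ σ φ φ' g x = ((σ ^ γ * Real.Gamma γ)⁻¹ * Real.exp ((σ - 1) / σ * φ x)) •
      ∫ τ in Ioo a x, rlKernel φ φ' γ x τ • (Real.exp (-((σ - 1) / σ * φ τ)) • g τ) := by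
  rw [propInt, integral_of_le hax, integral_Ioc_eq_integral_Ioo, mul_smul,
    ← MeasureTheory.integral_smul (Real.exp _)]
  congr 1
  refine setIntegral_congr_fun measurableSet_Ioo fun τ _ => ?_
  rw [smul_smul, smul_smul, rlKernel, mul_sub, Real.exp_sub, Real.exp_neg]
  congr 1
  field_simp

theorem propInt_propInt_eq_propInt_add {a t σ α β : ℝ} {φ φ' : ℝ → ℝ} {f : ℝ → ℂ}
    (hσ : 0 < σ) (hat : a ≤ t) (hφc : ContinuousOn φ (Icc a t))
    (hφ : ∀ x ∈ Ioo a t, HasDerivAt φ (φ' x) x) (hφ'c : ContinuousOn φ' (Ioo a t))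
    (hpos : ∀ x ∈ Ioo a t, 0 < φ' x) (hα : 0 < α) (hβ : 0 < β) (hf : ContinuousOn f (Icc a t)) :
    propInt a α σ φ φ' (propInt a β σ φ φ' f) t = propInt a (α + β) σ φ φ' f t := by
  have hconst : (σ ^ α * Real.Gamma α)⁻¹ * (σ ^ β * Real.Gamma β)⁻¹ * beta α β
      = (σ ^ (α + β) * Real.Gamma (α + β))⁻¹ := by
    have := Real.Gamma_pos_of_pos hα
    have := Real.Gamma_pos_of_pos hβ
    have := Real.Gamma_pos_of_pos (add_pos hα hβ)
    rw [beta, Real.rpow_add hσ]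
    field_simp
  set c := (σ - 1) / σ
  set h : ℝ → ℂ := fun s => Real.exp (-(c * φ s)) • f s
  have hh : ContinuousOn h (Icc a t) :=
    (Real.continuous_exp.comp_continuousOn (hφc.const_smul c).neg).smul hf
  have hinner : ∀ τ ∈ Ioo a t, Real.exp (-(c * φ τ)) • propInt a β σ φ φ' f τ
      = (σ ^ β * Real.Gamma β)⁻¹ • ∫ s in Ioo a τ, rlKernel φ φ' β τ s • h s := by
    intro τ hτ
    rw [propInt_eq_smul_integral_rlKernel hτ.1.le, smul_smul, mul_left_comm, ← Real.exp_add,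
      neg_add_cancel, Real.exp_zero, mul_one]
  rw [propInt_eq_smul_integral_rlKernel hat, propInt_eq_smul_integral_rlKernel hat,
    setIntegral_congr_fun measurableSet_Ioo fun τ hτ => by rw [hinner τ hτ, smul_comm],
    MeasureTheory.integral_smul,
    integral_rlKernel_smul_integral_rlKernel_smul hφc hφ hφ'c hpos hh hα hβ, smul_smul, smul_smul,
    ← hconst]
  congr 1
  ring

theorem propInt_semigroup_general (a b : ℝ) (σ : ℝ) (hσ : σ ∈ Set.Ioc (0 : ℝ) 1)
    (A B : ℝ) (hAa : A < a) (hbB : b < B)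
    (φ φ' : ℝ → ℝ)
    (hφ : ∀ t ∈ Set.Ioo A B, HasDerivAt φ (φ' t) t)
    (hφ'cont : ContinuousOn φ' (Set.Ioo A B))
    (hφ'pos : ∀ t ∈ Set.Ioo A B, 0 < φ' t)
    (α β : ℝ) (hα : 0 < α) (hβ : 0 < β)
    (f : ℝ → ℂ) (hf : ContinuousOn f (Set.Icc a b)) :
    ∀ t ∈ Set.Icc a b,
      propInt a α σ φ φ' (propInt a β σ φ φ' f) t = propInt a (α + β) σ φ φ' f t := by
  intro t ht
  have hIcc : Icc a t ⊆ Ioo A B :=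
    fun x hx => ⟨hAa.trans_le hx.1, hx.2.trans_lt (ht.2.trans_lt hbB)⟩
  have hIoo : Ioo a t ⊆ Ioo A B := Ioo_subset_Icc_self.trans hIcc
  exact propInt_propInt_eq_propInt_add hσ.1 ht.1
    (fun x hx => (hφ x (hIcc hx)).continuousAt.continuousWithinAt) (fun x hx => hφ x (hIoo hx))
    (hφ'cont.mono hIoo) (fun x hx => hφ'pos x (hIoo hx)) hα hβ (hf.mono (Icc_subset_Icc_right ht.2))

/-- Semigroup property of the left proportional fractional integrals with respect to `φ`:
`{}_aI^{α,σ,φ} ∘ {}_aI^{β,σ,φ} = {}_aI^{α+β,σ,φ}` on `[a,b]`. -/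
theorem propInt_semigroup (a b : ℝ) (hab : a < b) (σ : ℝ) (hσ : σ ∈ Set.Ioc (0 : ℝ) 1)
    (A B : ℝ) (hAa : A < a) (hbB : b < B)
    (φ φ' : ℝ → ℝ)
    (hφ : ∀ t ∈ Set.Ioo A B, HasDerivAt φ (φ' t) t)
    (hφ'cont : ContinuousOn φ' (Set.Ioo A B))
    (hφ'pos : ∀ t ∈ Set.Ioo A B, 0 < φ' t)
    (α β : ℝ) (hα : 0 < α) (hβ : 0 < β)
    (f : ℝ → ℂ) (hf : ContinuousOn f (Set.Icc a b)) :
    ∀ t ∈ Set.Icc a b,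
      propInt a α σ φ φ' (propInt a β σ φ φ' f) t = propInt a (α + β) σ φ φ' f t :=
  propInt_semigroup_general a b σ hσ A B hAa hbB φ φ' hφ hφ'cont hφ'pos α β hα hβ f hf
end

section
/- Let z₀ ∈ ℝ², let ψ₀, ψ₁ ∈ ℂ, and let σ ∈ ℂ with σ ≠ 0. Let Φ : ℝ² → ℝ be differentiable at z₀ with DΦ := ∂Φ/∂x(z₀) + ∂Φ/∂y(z₀) ≠ 0. Let λ : ℝ² → ℝ be differentiable at z₀ and satisfy ψ₀·(∂λ/∂x)(z₀) + ψ₁·(∂λ/∂y)(z₀) = DΦ·σ^{−1}·(1−σ). Let G : ℝ² → ℂ be differentiable at z₀. Then (1−σ)·G(z₀) + σ·(ψ₀·(∂G/∂x)(z₀) + ψ₁·(∂G/∂y)(z₀))/DΦ = e^{−λ(z₀)}·(DΦ)^{−1}·σ·( ψ₀·(∂(e^{λ}G)/∂x)(z₀) + ψ₁·(∂(e^{λ}G)/∂y)(z₀) ), where e^{λ}G denotes the function z ↦ exp(λ(z))·G(z). This is the pointwise, single-idempotent-component form of the exponential factorization Proposition (equation (10)) for the bicomplex proportional fractional weighted Cauchy–Riemann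 operator. -/
/-!
Conjugating by `e^λ` turns `𝒟_ψ` into `𝒟_ψ + 𝒟_ψ λ`, by the Leibniz and chain rules:
`e^{-λ} 𝒟_ψ (e^λ G) = 𝒟_ψ λ · G + 𝒟_ψ G`. The hypothesis on `λ` is exactly what makes
`σ / DΦ · 𝒟_ψ λ` equal to `1 - σ`, so multiplying by `σ / DΦ` gives the proportional operator.
-/

open Complex

noncomputable def weightedCR (ψ₀ ψ₁ : ℂ) (G : ℝ × ℝ → ℂ) (z : ℝ × ℝ) : ℂ :=
  ψ₀ * fderiv ℝ G z (1, 0) + ψ₁ * fderiv ℝ G z (0, 1)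

noncomputable def proportionalCR (σ D ψ₀ ψ₁ : ℂ) (G : ℝ × ℝ → ℂ) (z : ℝ × ℝ) : ℂ :=
  (1 - σ) * G z + σ * weightedCR ψ₀ ψ₁ G z / D

section weightedCR

variable {ψ₀ ψ₁ : ℂ} {z : ℝ × ℝ}

theorem weightedCR_mul {f G : ℝ × ℝ → ℂ} (hf : DifferentiableAt ℝ f z)
    (hG : DifferentiableAt ℝ G z) :
    weightedCR ψ₀ ψ₁ (fun w => f w * G w) z =
      weightedCR ψ₀ ψ₁ f z * G z + f z * weightedCR ψ₀ ψ₁ G z := by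
  simp only [weightedCR, fderiv_fun_mul hf hG, add_apply, smul_apply, smul_eq_mul]
  ring

theorem weightedCR_cexp {g : ℝ × ℝ → ℂ} (hg : DifferentiableAt ℝ g z) :
    weightedCR ψ₀ ψ₁ (fun w => exp (g w)) z = exp (g z) * weightedCR ψ₀ ψ₁ g z := by
  simp only [weightedCR, hg.hasFDerivAt.cexp.fderiv, smul_apply, smul_eq_mul]
  ring

theorem weightedCR_ofReal {lam : ℝ × ℝ → ℝ} (hlam : DifferentiableAt ℝ lam z) :
    weightedCR ψ₀ ψ₁ (fun w => (lam w : ℂ)) z =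
      ψ₀ * (fderiv ℝ lam z (1, 0) : ℂ) + ψ₁ * (fderiv ℝ lam z (0, 1) : ℂ) := by
  have h : fderiv ℝ (fun w => (lam w : ℂ)) z = ofRealCLM.comp (fderiv ℝ lam z) :=
    (ofRealCLM.hasFDerivAt.comp z hlam.hasFDerivAt).fderiv
  simp [weightedCR, h]

theorem weightedCR_cexp_mul {g G : ℝ × ℝ → ℂ} (hg : DifferentiableAt ℝ g z)
    (hG : DifferentiableAt ℝ G z) :
    weightedCR ψ₀ ψ₁ (fun w => exp (g w) * G w) z =
      exp (g z) * (weightedCR ψ₀ ψ₁ g z * G z + weightedCR ψ₀ ψ₁ G z) := by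
  rw [weightedCR_mul hg.cexp hG, weightedCR_cexp hg]
  ring

end weightedCR

theorem proportionalCR_eq_exp_neg_mul_weightedCR {σ D ψ₀ ψ₁ : ℂ} (hσ : σ ≠ 0) (hD : D ≠ 0)
    {g G : ℝ × ℝ → ℂ} {z : ℝ × ℝ} (hg : DifferentiableAt ℝ g z)
    (hG : DifferentiableAt ℝ G z) (hgσ : weightedCR ψ₀ ψ₁ g z = D * σ⁻¹ * (1 - σ)) :
    proportionalCR σ D ψ₀ ψ₁ G z =
      exp (-g z) * D⁻¹ * σ * weightedCR ψ₀ ψ₁ (fun w => exp (g w) * G w) z := by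
  rw [weightedCR_cexp_mul hg hG, hgσ, proportionalCR, exp_neg]
  field_simp

theorem exp_factorization_pointwise_general (z₀ : ℝ × ℝ) (ψ₀ ψ₁ σ : ℂ) (hσ : σ ≠ 0)
    (Φ : ℝ × ℝ → ℝ)
    (hDΦ : fderiv ℝ Φ z₀ (1, 0) + fderiv ℝ Φ z₀ (0, 1) ≠ 0)
    (lam : ℝ × ℝ → ℝ) (hlam : DifferentiableAt ℝ lam z₀)
    (hlamEq : ψ₀ * (fderiv ℝ lam z₀ (1, 0) : ℂ) + ψ₁ * (fderiv ℝ lam z₀ (0, 1) : ℂ) =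
      ((fderiv ℝ Φ z₀ (1, 0) + fderiv ℝ Φ z₀ (0, 1) : ℝ) : ℂ) * σ⁻¹ * (1 - σ))
    (G : ℝ × ℝ → ℂ) (hG : DifferentiableAt ℝ G z₀) :
    (1 - σ) * G z₀ +
        σ * (ψ₀ * fderiv ℝ G z₀ (1, 0) + ψ₁ * fderiv ℝ G z₀ (0, 1)) /
          ((fderiv ℝ Φ z₀ (1, 0) + fderiv ℝ Φ z₀ (0, 1) : ℝ) : ℂ) =
      Complex.exp (-(lam z₀ : ℂ)) *
        ((fderiv ℝ Φ z₀ (1, 0) + fderiv ℝ Φ z₀ (0, 1) : ℝ) : ℂ)⁻¹ * σ *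
        (ψ₀ * fderiv ℝ (fun z => Complex.exp (lam z : ℂ) * G z) z₀ (1, 0) +
          ψ₁ * fderiv ℝ (fun z => Complex.exp (lam z : ℂ) * G z) z₀ (0, 1)) :=
  proportionalCR_eq_exp_neg_mul_weightedCR hσ (ofReal_ne_zero.mpr hDΦ)
    (ofRealCLM.differentiableAt.comp z₀ hlam) hG
    ((weightedCR_ofReal hlam).trans hlamEq)

/-- Pointwise, single-idempotent-component form of the exponential factorization
(equation (10)): if `ψ₀ ∂λ/∂x + ψ₁ ∂λ/∂y = DΦ σ⁻¹ (1-σ)` at `z₀`, then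
`(1-σ) G + σ 𝒟_ψ G / DΦ = e^{-λ} (DΦ)⁻¹ σ 𝒟_ψ (e^{λ} G)` at `z₀`. -/
theorem exp_factorization_pointwise (z₀ : ℝ × ℝ) (ψ₀ ψ₁ σ : ℂ) (hσ : σ ≠ 0)
    (Φ : ℝ × ℝ → ℝ) (hΦ : DifferentiableAt ℝ Φ z₀)
    (hDΦ : fderiv ℝ Φ z₀ (1, 0) + fderiv ℝ Φ z₀ (0, 1) ≠ 0)
    (lam : ℝ × ℝ → ℝ) (hlam : DifferentiableAt ℝ lam z₀)
    (hlamEq : ψ₀ * (fderiv ℝ lam z₀ (1, 0) : ℂ) + ψ₁ * (fderiv ℝ lam z₀ (0, 1) : ℂ) =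
      ((fderiv ℝ Φ z₀ (1, 0) + fderiv ℝ Φ z₀ (0, 1) : ℝ) : ℂ) * σ⁻¹ * (1 - σ))
    (G : ℝ × ℝ → ℂ) (hG : DifferentiableAt ℝ G z₀) :
    (1 - σ) * G z₀ +
        σ * (ψ₀ * fderiv ℝ G z₀ (1, 0) + ψ₁ * fderiv ℝ G z₀ (0, 1)) /
          ((fderiv ℝ Φ z₀ (1, 0) + fderiv ℝ Φ z₀ (0, 1) : ℝ) : ℂ) =
      Complex.exp (-(lam z₀ : ℂ)) *
        ((fderiv ℝ Φ z₀ (1, 0) + fderiv ℝ Φ z₀ (0, 1) : ℝ) : ℂ)⁻¹ * σ *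
        (ψ₀ * fderiv ℝ (fun z => Complex.exp (lam z : ℂ) * G z) z₀ (1, 0) +
          ψ₁ * fderiv ℝ (fun z => Complex.exp (lam z : ℂ) * G z) z₀ (0, 1)) :=
  exp_factorization_pointwise_general z₀ ψ₀ ψ₁ σ hσ Φ hDΦ lam hlam hlamEq G hG
end
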